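/- Let X be a finite nonempty set of words over {a, b} with |X| = m. Then there exist unitary matrices U_a, U_b ∈ U(2^m, ℂ), a unit vector u₀ ∈ ℂ^{2^m}, and a set S of accepting coordinates such that for every word z over {a, b}: the acceptance probability of z is 0 if z ∈ X, and is strictly positive if z ∉ X. Consequently, for any finite set Y of words disjoint from X with |X| ≤ |Y|, the languages X and Y are separated by a nondeterministic MCQFA with 2^{|X|} states. -/

import Mathlib

/-!
The matrices `M_a = diag(1 + 2i, 1 - 2i)` and `M_b = [[1, 2], [-2, 1]]` over `ℤ[i]` are `√5` times
unitaries, and for `u = (1, 1)` the vectors `M_z u` of distinct words `z` are never proportional.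
Indeed, modulo the prime `1 + 2i` each `M_σ` has rank one, so the reduction of `M_z u` is a nonzero
multiple of a vector determined by the last letter of `z`, and these vectors (together with `u`)
are pairwise independent; while for two words with the same last letter the determinant
`det [M_x u, M_z u]` is `5` times that of the shortened words.

Conjugating by a unitary whose first row is orthogonal to `M_x u` therefore gives a 2-state
automaton whose first amplitude vanishes exactly on the word `x`. The tensor product of these
automata over `x ∈ X` has, at the all-zero state, the product of their amplitudes, which vanishes
exactly on `X`.
-/

open Matrix ComplexConjugate

namespace MCQFA

section FinalState

variable {α n R : Type*} [Fintype n]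

def finalState [NonUnitalNonAssocSemiring R] (U : α → Matrix n n R) (v : n → R) (z : List α) :
    n → R :=
  z.foldl (fun v c => U c *ᵥ v) v

lemma finalState_reindex [NonUnitalNonAssocSemiring R] (U : α → Matrix n n R) {κ : Type*}
    [Fintype κ] (e : n ≃ κ) (v : n → R) (z : List α) :
    finalState (fun c => reindex e e (U c)) (v ∘ e.symm) z = finalState U v z ∘ e.symm :=
  List.foldl_hom (· ∘ e.symm) fun w c => by
    dsimp only
    rw [reindex_apply, submatrix_mulVec_equiv, Equiv.symm_symm, Function.comp_assoc,
      Equiv.symm_comp_self, Function.comp_id]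

lemma finalState_map [NonAssocSemiring R] {S : Type*} [NonAssocSemiring S] (U : α → Matrix n n R)
    (f : R →+* S) (v : n → R) (z : List α) :
    finalState (fun c => (U c).map f) (f ∘ v) z = f ∘ finalState U v z :=
  List.foldl_hom (f ∘ ·) fun w c => funext fun i => (RingHom.map_mulVec f (U c) w i).symm

lemma finalState_conj [Semiring R] [StarRing R] [DecidableEq n] (U : α → Matrix n n R)
    {V : Matrix n n R} (hV : star V * V = 1) (v : n → R) (z : List α) :
    finalState (fun c => V * U c * star V) (V *ᵥ v) z = V *ᵥ finalState U v z :=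
  List.foldl_hom (V *ᵥ ·) fun w c => by
    rw [mulVec_mulVec, Matrix.mul_assoc, Matrix.mul_assoc, hV, Matrix.mul_one, mulVec_mulVec]

variable [CommSemiring R] (U : α → Matrix n n R)

lemma finalState_smul_init (s : R) (v : n → R) (z : List α) :
    finalState U (s • v) z = s • finalState U v z :=
  List.foldl_hom (s • ·) fun w c => mulVec_smul (U c) s w

lemma finalState_smul (s : R) (v : n → R) (z : List α) :
    finalState (fun c => s • U c) v z = s ^ z.length • finalState U v z := by
  induction z generalizing v with
  | nil => simp [finalState]
  | cons c z ih =>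
    change finalState _ (_ *ᵥ v) z = _
    rw [ih, smul_mulVec, finalState_smul_init, smul_smul, List.length_cons, pow_succ]
    rfl

end FinalState

lemma reindex_mem_unitaryGroup {n κ R : Type*} [Fintype n] [DecidableEq n] [Fintype κ]
    [DecidableEq κ] [CommRing R] [StarRing R] (e : n ≃ κ) {A : Matrix n n R}
    (hA : A ∈ unitaryGroup n R) : reindex e e A ∈ unitaryGroup κ R := by
  rw [mem_unitaryGroup_iff'] at hA ⊢
  rw [star_eq_conjTranspose, conjTranspose_reindex, reindex_apply, reindex_apply,
    submatrix_mul_equiv, ← star_eq_conjTranspose, hA, submatrix_one_equiv]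

lemma sum_norm_sq_mulVec {n : Type*} [Fintype n] [DecidableEq n] {U : Matrix n n ℂ}
    (hU : U ∈ unitaryGroup n ℂ) (v : n → ℂ) : ∑ j, ‖(U *ᵥ v) j‖ ^ 2 = ∑ j, ‖v j‖ ^ 2 := by
  have hnorm : ∀ w : n → ℂ, ((∑ j, ‖w j‖ ^ 2 : ℝ) : ℂ) = star w ⬝ᵥ w := fun w => by
    simp [dotProduct, Complex.conj_mul']
  refine Complex.ofReal_injective ?_
  rw [hnorm, hnorm, star_mulVec, dotProduct_mulVec, vecMul_vecMul, ← star_eq_conjTranspose,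
    (mem_unitaryGroup_iff').1 hU, vecMul_one]

section PiKron

variable {ι n R : Type*} [Fintype ι] [CommSemiring R]

def piKron (A : ι → Matrix n n R) : Matrix (ι → n) (ι → n) R :=
  of fun p q => ∏ k, A k (p k) (q k)

def piVec (v : ι → n → R) : (ι → n) → R :=
  fun p => ∏ k, v k (p k)

lemma piKron_mulVec [DecidableEq ι] [Fintype n] (A : ι → Matrix n n R) (v : ι → n → R) :
    piKron A *ᵥ piVec v = piVec fun k => A k *ᵥ v k := by
  ext p
  simp only [mulVec, dotProduct, piKron, piVec, of_apply, ← Finset.prod_mul_distrib,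
    Fintype.prod_sum]

lemma piKron_mul [DecidableEq ι] [Fintype n] (A B : ι → Matrix n n R) :
    piKron A * piKron B = piKron fun k => A k * B k := by
  ext p q
  simp only [mul_apply, piKron, of_apply, ← Finset.prod_mul_distrib, Fintype.prod_sum]

lemma piKron_one [DecidableEq n] : piKron (fun _ : ι => (1 : Matrix n n R)) = 1 := by
  ext p q
  simp [piKron, one_apply, Finset.prod_boole, funext_iff]

lemma star_piKron [StarRing R] (A : ι → Matrix n n R) :
    star (piKron A) = piKron fun k => star (A k) := by
  ext p q
  simp [piKron]

lemma piKron_mem_unitaryGroup {R : Type*} [CommRing R] [StarRing R] [DecidableEq ι] [Fintype n]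
    [DecidableEq n] {A : ι → Matrix n n R} (hA : ∀ k, A k ∈ unitaryGroup n R) :
    piKron A ∈ unitaryGroup (ι → n) R := by
  rw [mem_unitaryGroup_iff', star_piKron, piKron_mul]
  simp only [fun k => (mem_unitaryGroup_iff').1 (hA k), piKron_one]

lemma sum_norm_sq_piVec [DecidableEq ι] [Fintype n] (v : ι → n → ℂ) :
    ∑ p, ‖piVec v p‖ ^ 2 = ∏ k, ∑ j, ‖v k j‖ ^ 2 := by
  simp only [piVec, norm_prod, Finset.prod_pow, Fintype.prod_sum]

lemma finalState_piKron [DecidableEq ι] [Fintype n] {α : Type*} (U : ι → α → Matrix n n R)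
    (v : ι → n → R) (z : List α) :
    finalState (fun c => piKron fun k => U k c) (piVec v) z =
      piVec fun k => finalState (U k) (v k) z := by
  rw [finalState, List.foldl_hom piVec (g₁ := fun w c k => U k c *ᵥ w k)
    fun w c => piKron_mulVec _ _]
  congr 1
  funext k
  exact (List.foldl_hom (fun w : ι → n → R => w k) (g₁ := fun w c k => U k c *ᵥ w k)
    (g₂ := fun w c => U k c *ᵥ w) fun _ _ => rfl).symm

end PiKron

section Cross

variable {R : Type*} [CommRing R]

def cross (v w : Fin 2 → R) : R := v 0 * w 1 - v 1 * w 0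

lemma cross_self (v : Fin 2 → R) : cross v v = 0 := by
  rw [cross, mul_comm, sub_self]

lemma cross_smul (c d : R) (v w : Fin 2 → R) : cross (c • v) (d • w) = c * d * cross v w := by
  simp only [cross, Pi.smul_apply, smul_eq_mul]
  ring

lemma cross_smul_right (d : R) (v w : Fin 2 → R) : cross v (d • w) = d * cross v w := by
  simp only [cross, Pi.smul_apply, smul_eq_mul]
  ring

lemma cross_mulVec (A : Matrix (Fin 2) (Fin 2) R) (v w : Fin 2 → R) :
    cross (A *ᵥ v) (A *ᵥ w) = A.det * cross v w := by
  simp only [cross, mulVec, dotProduct, Fin.sum_univ_two, det_fin_two]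
  ring

lemma map_cross {S : Type*} [CommRing S] (f : R →+* S) (v w : Fin 2 → R) :
    f (cross v w) = cross (f ∘ v) (f ∘ w) := by
  simp [cross]

end Cross

def gen : Fin 2 → Matrix (Fin 2) (Fin 2) GaussianInt
  | 0 => !![⟨1, 2⟩, 0; 0, ⟨1, -2⟩]
  | 1 => !![1, 2; -2, 1]

lemma det_gen (σ : Fin 2) : (gen σ).det = 5 := by
  fin_cases σ <;> decide

lemma conjTranspose_gen_mul_self (σ : Fin 2) : (gen σ)ᴴ * gen σ = 5 := by
  fin_cases σ <;> decide

def wordVec (z : List (Fin 2)) : Fin 2 → GaussianInt :=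
  z.foldr (fun c v => gen c *ᵥ v) ![1, 1]

lemma finalState_gen (z : List (Fin 2)) : finalState gen ![1, 1] z = wordVec z.reverse := by
  rw [wordVec, List.foldr_reverse]
  rfl

instance : Fact (Nat.Prime 5) := ⟨by norm_num⟩

def toZMod5 : GaussianInt →+* ZMod 5 := Zsqrtd.lift ⟨2, by decide⟩

-- `headDir (some σ)` spans the image of `gen σ` modulo `1 + 2i`; `headDir none` is `(1, 1)`.
def headDir : Option (Fin 2) → Fin 2 → ZMod 5
  | none => ![1, 1]
  | some 0 => ![0, 1]
  | some 1 => ![1, 3]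

lemma map_gen_mulVec_headDir :
    ∀ σ o, ∃ d : ZMod 5, d ≠ 0 ∧ (gen σ).map toZMod5 *ᵥ headDir o = d • headDir (some σ) := by
  decide

lemma cross_headDir_ne_zero : ∀ o o', o ≠ o' → cross (headDir o) (headDir o') ≠ 0 := by
  decide

lemma toZMod5_comp_wordVec (z : List (Fin 2)) :
    ∃ c : ZMod 5, c ≠ 0 ∧ toZMod5 ∘ wordVec z = c • headDir z.head? := by
  induction z with
  | nil => exact ⟨1, one_ne_zero, by ext j; fin_cases j <;> rfl⟩
  | cons σ z ih =>
    obtain ⟨c, hc, hz⟩ := ih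
    obtain ⟨d, hd, hσ⟩ := map_gen_mulVec_headDir σ z.head?
    refine ⟨c * d, mul_ne_zero hc hd, ?_⟩
    have : toZMod5 ∘ (gen σ *ᵥ wordVec z) = (gen σ).map toZMod5 *ᵥ (toZMod5 ∘ wordVec z) :=
      funext (RingHom.map_mulVec _ _ _)
    rw [wordVec, List.foldr_cons, ← wordVec, this, hz, mulVec_smul, hσ, smul_smul,
      List.head?_cons]

lemma cross_wordVec_ne_zero {x z : List (Fin 2)} (h : x.head? ≠ z.head?) :
    cross (wordVec x) (wordVec z) ≠ 0 := by
  obtain ⟨c, hc, hx⟩ := toZMod5_comp_wordVec x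
  obtain ⟨d, hd, hz⟩ := toZMod5_comp_wordVec z
  intro h0
  have := congrArg toZMod5 h0
  rw [map_cross, hx, hz, cross_smul, map_zero] at this
  exact cross_headDir_ne_zero _ _ h (by simpa [hc, hd] using this)

lemma cross_wordVec_cons (σ : Fin 2) (x z : List (Fin 2)) :
    cross (wordVec (σ :: x)) (wordVec (σ :: z)) = 5 * cross (wordVec x) (wordVec z) := by
  simp only [wordVec, List.foldr_cons]
  rw [cross_mulVec, det_gen]

theorem cross_wordVec_eq_zero_iff {x z : List (Fin 2)} :
    cross (wordVec x) (wordVec z) = 0 ↔ x = z := by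
  refine ⟨fun h => ?_, fun h => h ▸ cross_self _⟩
  induction x generalizing z with
  | nil =>
    cases z with
    | nil => rfl
    | cons τ z => exact absurd h (cross_wordVec_ne_zero nofun)
  | cons σ x ih =>
    cases z with
    | nil => exact absurd h (cross_wordVec_ne_zero nofun)
    | cons τ z =>
      obtain rfl : σ = τ := by
        by_contra hστ
        exact cross_wordVec_ne_zero (by simpa using hστ) h
      rw [cross_wordVec_cons, mul_eq_zero] at h
      rw [ih (h.resolve_left (by decide))]

lemma wordVec_ne_zero (z : List (Fin 2)) : wordVec z ≠ 0 := by
  intro h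
  have : cross (wordVec z) (wordVec (0 :: z)) = 0 := by simp [h, cross]
  exact List.cons_ne_self 0 z (cross_wordVec_eq_zero_iff.1 this).symm

lemma mem_unitaryGroup_fin_two {a b : ℂ} (h : Complex.normSq a + Complex.normSq b = 1) :
    !![a, b; -conj b, conj a] ∈ unitaryGroup (Fin 2) ℂ := by
  have h' : a * conj a + b * conj b = 1 := by
    simpa [Complex.mul_conj] using congrArg ((↑) : ℝ → ℂ) h
  rw [mem_unitaryGroup_iff]
  ext i j
  fin_cases i <;> fin_cases j <;> simp [mul_apply, Fin.sum_univ_two, star_eq_conjTranspose] <;>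
    first | ring1 | linear_combination h'

lemma exists_mem_unitaryGroup_mulVec_apply_zero_eq_zero_iff {v : Fin 2 → ℂ} (hv : v ≠ 0) :
    ∃ V ∈ unitaryGroup (Fin 2) ℂ, ∀ w, (V *ᵥ w) 0 = 0 ↔ cross v w = 0 := by
  have hpos : 0 < Complex.normSq (v 0) + Complex.normSq (v 1) := by
    obtain ⟨j, hj⟩ := Function.ne_iff.1 hv
    rw [← Fin.sum_univ_two (fun j => Complex.normSq (v j))]
    exact Finset.sum_pos' (fun j _ => Complex.normSq_nonneg _)
      ⟨j, Finset.mem_univ j, Complex.normSq_pos.2 hj⟩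
  set r : ℝ := √(Complex.normSq (v 0) + Complex.normSq (v 1)) with hr
  have hr0 : (r : ℂ) ≠ 0 := Complex.ofReal_ne_zero.2 (Real.sqrt_pos.2 hpos).ne'
  refine ⟨!![-v 1 / r, v 0 / r; -conj (v 0 / r), conj (-v 1 / r)], mem_unitaryGroup_fin_two ?_,
    fun w => ?_⟩
  · rw [Complex.normSq_div, Complex.normSq_div, Complex.normSq_neg, Complex.normSq_ofReal, hr,
      Real.mul_self_sqrt hpos.le, ← add_div, add_comm, div_self hpos.ne']
  · have : (!![-v 1 / r, v 0 / r; -conj (v 0 / r), conj (-v 1 / r)] *ᵥ w) 0 = cross v w / r := by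
      simp only [mulVec, dotProduct, Fin.sum_univ_two, cross, of_apply, cons_val', cons_val_zero,
        cons_val_one, empty_val', cons_val_fin_one]
      ring
    rw [this, div_eq_zero_iff, or_iff_left hr0]

lemma smul_map_gen_mem_unitaryGroup (σ : Fin 2) :
    ((√5 : ℝ) : ℂ)⁻¹ • (gen σ).map GaussianInt.toComplex ∈ unitaryGroup (Fin 2) ℂ := by
  have hmap : ((gen σ).map GaussianInt.toComplex)ᴴ * (gen σ).map GaussianInt.toComplex =
      (5 : ℂ) • 1 := by
    rw [← conjTranspose_map _ GaussianInt.toComplex_star, ← Matrix.map_mul,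
      conjTranspose_gen_mul_self, ofNat_smul_eq_nsmul (R := ℂ), nsmul_one, Nat.cast_ofNat]
    exact map_ofNat (GaussianInt.toComplex.mapMatrix : Matrix (Fin 2) (Fin 2) _ →+* _) 5
  have hscalar : star ((√5 : ℝ) : ℂ)⁻¹ * ((√5 : ℝ) : ℂ)⁻¹ * 5 = 1 := by
    rw [star_inv₀, Complex.star_def, Complex.conj_ofReal, ← mul_inv, ← Complex.ofReal_mul,
      Real.mul_self_sqrt (by norm_num)]
    norm_num
  rw [mem_unitaryGroup_iff', star_smul, smul_mul_smul, star_eq_conjTranspose, hmap]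
  rw [smul_smul, hscalar, one_smul]

theorem exists_unitary_finalState_eq_zero_iff_eq (x : List (Fin 2)) :
    ∃ (G : Fin 2 → Matrix (Fin 2) (Fin 2) ℂ) (y : Fin 2 → ℂ),
      (∀ τ, G τ ∈ unitaryGroup (Fin 2) ℂ) ∧ ∑ j, ‖y j‖ ^ 2 = 1 ∧
        ∀ z, finalState G y z 0 = 0 ↔ z = x := by
  have hv : GaussianInt.toComplex ∘ wordVec x.reverse ≠ 0 := by
    simpa [funext_iff] using wordVec_ne_zero x.reverse
  obtain ⟨V, hV, hV0⟩ := exists_mem_unitaryGroup_mulVec_apply_zero_eq_zero_iff hv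
  set s5 : ℂ := ((√5 : ℝ) : ℂ)⁻¹
  set s2 : ℂ := ((√2 : ℝ) : ℂ)⁻¹
  refine ⟨fun τ => V * (s5 • (gen τ).map GaussianInt.toComplex) * star V,
    V *ᵥ (s2 • GaussianInt.toComplex ∘ ![1, 1]),
    fun τ => mul_mem (mul_mem hV (smul_map_gen_mem_unitaryGroup τ)) (Unitary.star_mem hV), ?_,
    fun z => ?_⟩
  · rw [sum_norm_sq_mulVec hV]
    norm_num [s2, Fin.sum_univ_two]
  · have hfinal : finalState (fun τ => V * (s5 • (gen τ).map GaussianInt.toComplex) * star V)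
          (V *ᵥ (s2 • GaussianInt.toComplex ∘ ![1, 1])) z =
        V *ᵥ ((s5 ^ z.length * s2) • GaussianInt.toComplex ∘ wordVec z.reverse) := by
      rw [finalState_conj _ ((mem_unitaryGroup_iff').1 hV), finalState_smul, finalState_smul_init,
        finalState_map, finalState_gen, smul_smul]
    have hs : s5 ^ z.length * s2 ≠ 0 := by simp [s5, s2]
    rw [hfinal, hV0, cross_smul_right, mul_eq_zero, or_iff_right hs, ← map_cross,
      map_eq_zero_iff _ GaussianInt.toComplex_injective, cross_wordVec_eq_zero_iff,
      List.reverse_inj, eq_comm]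

theorem exists_unitary_finalState_eq_zero_iff_mem (X : Finset (List (Fin 2))) :
    ∃ (U : Fin 2 → Matrix (X → Fin 2) (X → Fin 2) ℂ) (u₀ : (X → Fin 2) → ℂ),
      (∀ τ, U τ ∈ unitaryGroup (X → Fin 2) ℂ) ∧ ∑ p, ‖u₀ p‖ ^ 2 = 1 ∧
        ∀ z, finalState U u₀ z 0 = 0 ↔ z ∈ X := by
  choose G y hG hy hGy using fun x : X => exists_unitary_finalState_eq_zero_iff_eq x
  refine ⟨fun τ => piKron fun x => G x τ, piVec y, fun τ => piKron_mem_unitaryGroup (hG · τ),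
    by simp [sum_norm_sq_piVec, hy], fun z => ?_⟩
  rw [finalState_piKron, piVec, Finset.prod_eq_zero_iff]
  simp [hGy]

end MCQFA

theorem stmt19_general (X : Finset (List (Fin 2))) (m : ℕ) (hm : X.card = m) :
    ∃ (U : Fin 2 → Matrix (Fin (2 ^ m)) (Fin (2 ^ m)) ℂ)
      (u₀ : Fin (2 ^ m) → ℂ) (S : Finset (Fin (2 ^ m))),
      (∀ τ : Fin 2, U τ ∈ Matrix.unitaryGroup (Fin (2 ^ m)) ℂ) ∧
      (∑ j, ‖u₀ j‖ ^ 2 = 1) ∧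
      (∀ z : List (Fin 2),
        (z ∈ X →
          ∑ j ∈ S, ‖(z.foldl (fun v c => (U c).mulVec v) u₀) j‖ ^ 2 = 0) ∧
        (z ∉ X →
          0 < ∑ j ∈ S, ‖(z.foldl (fun v c => (U c).mulVec v) u₀) j‖ ^ 2)) ∧
      (∀ Y : Finset (List (Fin 2)), Disjoint X Y → X.card ≤ Y.card →
        ∀ y ∈ Y,
          0 < ∑ j ∈ S, ‖(y.foldl (fun v c => (U c).mulVec v) u₀) j‖ ^ 2) := by
  obtain ⟨U, u₀, hU, hu₀, hacc⟩ := MCQFA.exists_unitary_finalState_eq_zero_iff_mem X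
  let e : (X → Fin 2) ≃ Fin (2 ^ m) := Fintype.equivFinOfCardEq (by simp [hm])
  have hprob : ∀ z : List (Fin 2),
      ∑ j ∈ {e 0}, ‖(z.foldl (fun v c => (reindex e e (U c)).mulVec v) (u₀ ∘ e.symm)) j‖ ^ 2 =
        ‖MCQFA.finalState U u₀ z 0‖ ^ 2 := fun z => by
    rw [Finset.sum_singleton, ← MCQFA.finalState, MCQFA.finalState_reindex]
    simp
  have hpos : ∀ z ∉ X, 0 < ‖MCQFA.finalState U u₀ z 0‖ ^ 2 := fun z hz =>
    pow_pos (norm_pos_iff.2 (mt (hacc z).1 hz)) 2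
  refine ⟨fun c => reindex e e (U c), u₀ ∘ e.symm, {e 0},
    fun τ => MCQFA.reindex_mem_unitaryGroup e (hU τ), ?_, fun z => ⟨fun hz => ?_, fun hz => ?_⟩,
    fun Y hXY _ y hy => ?_⟩
  · rw [← hu₀]
    exact e.symm.sum_comp fun p => ‖u₀ p‖ ^ 2
  · rw [hprob, (hacc z).2 hz, norm_zero, zero_pow two_ne_zero]
  · rw [hprob]
    exact hpos z hz
  · rw [hprob]
    exact hpos y (Finset.disjoint_right.1 hXY hy)

/-- for a finite nonempty set `X` of words over `{a, b}` (here `Fin 2`)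
with `|X| = m`, there is a `2^m`-state nondeterministic MCQFA accepting exactly the
words outside `X` with nonzero probability; hence `X` is separated from any disjoint
finite set `Y` with `|X| ≤ |Y|` by a nondeterministic MCQFA with `2^{|X|}` states. -/
theorem stmt19 (X : Finset (List (Fin 2))) (hX : X.Nonempty) (m : ℕ) (hm : X.card = m) :
    ∃ (U : Fin 2 → Matrix (Fin (2 ^ m)) (Fin (2 ^ m)) ℂ)
      (u₀ : Fin (2 ^ m) → ℂ) (S : Finset (Fin (2 ^ m))),
      (∀ τ : Fin 2, U τ ∈ Matrix.unitaryGroup (Fin (2 ^ m)) ℂ) ∧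
      (∑ j, ‖u₀ j‖ ^ 2 = 1) ∧
      (∀ z : List (Fin 2),
        (z ∈ X →
          ∑ j ∈ S, ‖(z.foldl (fun v c => (U c).mulVec v) u₀) j‖ ^ 2 = 0) ∧
        (z ∉ X →
          0 < ∑ j ∈ S, ‖(z.foldl (fun v c => (U c).mulVec v) u₀) j‖ ^ 2)) ∧
      (∀ Y : Finset (List (Fin 2)), Disjoint X Y → X.card ≤ Y.card →
        ∀ y ∈ Y,
          0 < ∑ j ∈ S, ‖(y.foldl (fun v c => (U c).mulVec v) u₀) j‖ ^ 2) :=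
  stmt19_general X m hm
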